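/- Let A be a ring, G = G(A_A) its right Goldie radical, and X a non-singular nonzero right A-module (so X·G = 0 and X is naturally a right A/G-module). Then X is an injective A/G-module if and only if X is an injective A-module. -/
import Mathlib


open MulOpposite

namespace TugPaper

universe u v

/-- A submodule `N` of `M` is essential if it intersects every nonzero submodule nontrivially. -/
def IsEssentialSubmodule {R : Type*} {M : Type*} [Ring R] [AddCommGroup M] [Module R M]
    (N : Submodule R M) : Prop :=
  ∀ Z : Submodule R M, Z ≠ ⊥ → N ⊓ Z ≠ ⊥

/-- The right annihilator `r(x) = {a : A | x·a = 0}` of an element `x` of a right `A`-module,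
as a right ideal of `A` (i.e. a submodule of `A` viewed as a right module over itself). -/
def rAnn (A : Type*) [Ring A] {M : Type*} [AddCommGroup M] [Module Aᵐᵒᵖ M] (x : M) :
    Submodule Aᵐᵒᵖ A where
  carrier := {a : A | op a • x = 0}
  zero_mem' := by simp
  add_mem' := by
    intro a b ha hb
    simp only [Set.mem_setOf_eq] at *
    rw [op_add, add_smul, ha, hb, add_zero]
  smul_mem' := by
    intro c a ha
    simp only [Set.mem_setOf_eq] at *
    have : (c • a : A) = a * c.unop := rfl
    rw [this]
    have h2 : op (a * c.unop) = op c.unop * op a := by simp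
    rw [h2, mul_smul, ha, smul_zero]

/-- A right `A`-module `M` is non-singular if its singular submodule is zero, i.e. the only
element whose right annihilator is an essential right ideal is `0`. -/
def IsNonsingular (A : Type*) [Ring A] (M : Type*) [AddCommGroup M] [Module Aᵐᵒᵖ M] : Prop :=
  ∀ x : M, IsEssentialSubmodule (rAnn A x) → x = 0

/-- The Goldie radical of a right `A`-module `M`: the intersection of all submodules `Y`
such that `M/Y` is non-singular. -/
def goldieRadical (A : Type*) [Ring A] (M : Type*) [AddCommGroup M] [Module Aᵐᵒᵖ M] :
    Submodule Aᵐᵒᵖ M :=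
  sInf {Y : Submodule Aᵐᵒᵖ M | IsNonsingular A (M ⧸ Y)}

/-- A right `A`-module `M` is automorphism-invariant: for every injective module `Q`
containing (a copy of) `M` as an essential submodule, every automorphism of `Q` maps `M`
into `M`. -/
def AutomorphismInvariant (A : Type u) [Ring A] (M : Type v) [AddCommGroup M]
    [Module Aᵐᵒᵖ M] : Prop :=
  ∀ (Q : Type v) [AddCommGroup Q] [Module Aᵐᵒᵖ Q], Module.Injective Aᵐᵒᵖ Q →
    ∀ i : M →ₗ[Aᵐᵒᵖ] Q, Function.Injective i →
      IsEssentialSubmodule (LinearMap.range i) →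
        ∀ g : Q ≃ₗ[Aᵐᵒᵖ] Q, ∀ m : M, ∃ m' : M, g (i m) = i m'

/-- A module `M` is quasi-injective if every homomorphism from a submodule of `M` into `M`
extends to an endomorphism of `M`. -/
def QuasiInjective (A : Type*) [Ring A] (M : Type*) [AddCommGroup M] [Module Aᵐᵒᵖ M] : Prop :=
  ∀ (N : Submodule Aᵐᵒᵖ M) (f : N →ₗ[Aᵐᵒᵖ] M), ∃ g : M →ₗ[Aᵐᵒᵖ] M, ∀ n : N, g n = f n

/-- A right ideal of `A` is two-sided if it is also closed under left multiplication. -/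
def IsTwoSided (A : Type*) [Ring A] (I : Submodule Aᵐᵒᵖ A) : Prop :=
  ∀ a : A, ∀ x ∈ I, a * x ∈ I

/-- A ring `A` is right strongly semiprime if every two-sided ideal of `A` which is essential
as a right ideal contains a finite subset with zero right annihilator. -/
def RightStronglySemiprime (A : Type*) [Ring A] : Prop :=
  ∀ I : Submodule Aᵐᵒᵖ A, IsTwoSided A I → IsEssentialSubmodule I →
    ∃ S : Finset A, (S : Set A) ⊆ (I : Set A) ∧ ∀ a : A, (∀ s ∈ S, s * a = 0) → a = 0

/-- A ring is semiprime if it has no nonzero two-sided ideal with zero square. -/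
def SemiprimeRing (A : Type*) [Ring A] : Prop :=
  ∀ I : Submodule Aᵐᵒᵖ A, IsTwoSided A I → (∀ x ∈ I, ∀ y ∈ I, x * y = 0) → I = ⊥

/-- The ring `A` does not contain an infinite direct sum of nonzero two-sided ideals. -/
def NoInfiniteIdealDirectSum (A : Type*) [Ring A] : Prop :=
  ¬ ∃ I : ℕ → Submodule Aᵐᵒᵖ A,
      (∀ n, IsTwoSided A (I n)) ∧ (∀ n, I n ≠ ⊥) ∧
        ∀ n, I n ⊓ (⨆ m ∈ {m : ℕ | m ≠ n}, I m) = ⊥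

/-- A module is square-free if it does not contain a direct sum of two nonzero isomorphic
submodules. -/
def SquareFreeModule (A : Type*) [Ring A] (M : Type*) [AddCommGroup M] [Module Aᵐᵒᵖ M] : Prop :=
  ¬ ∃ D₁ D₂ : Submodule Aᵐᵒᵖ M,
      D₁ ≠ ⊥ ∧ D₂ ≠ ⊥ ∧ D₁ ⊓ D₂ = ⊥ ∧ Nonempty (D₁ ≃ₗ[Aᵐᵒᵖ] D₂)

/-- A module is uniform if any two nonzero submodules have nonzero intersection. -/
def UniformModule (A : Type*) [Ring A] (M : Type*) [AddCommGroup M] [Module Aᵐᵒᵖ M] : Prop :=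
  ∀ N₁ N₂ : Submodule Aᵐᵒᵖ M, N₁ ≠ ⊥ → N₂ ≠ ⊥ → N₁ ⊓ N₂ ≠ ⊥

/-- `N` is an essential submodule of `P` (both submodules of an ambient module). -/
def EssentialIn {R : Type*} {M : Type*} [Ring R] [AddCommGroup M] [Module R M]
    (N P : Submodule R M) : Prop :=
  N ≤ P ∧ ∀ Z : Submodule R M, Z ≤ P → Z ≠ ⊥ → N ⊓ Z ≠ ⊥

/-- A submodule is closed if it has no proper essential extension inside the ambient module. -/
def ClosedSubmodule {R : Type*} {M : Type*} [Ring R] [AddCommGroup M] [Module R M]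
    (N : Submodule R M) : Prop :=
  ∀ P : Submodule R M, EssentialIn N P → N = P

/-- A module is CS if every closed submodule is a direct summand. -/
def CSModule (A : Type*) [Ring A] (M : Type*) [AddCommGroup M] [Module Aᵐᵒᵖ M] : Prop :=
  ∀ N : Submodule Aᵐᵒᵖ M, ClosedSubmodule N → ∃ P : Submodule Aᵐᵒᵖ M, IsCompl N P

/-- `X` is injective relative to `Y` (`Y`-injective): every homomorphism from a submodule of `Y`
into `X` extends to a homomorphism `Y → X`. -/
def RelativelyInjective (R : Type*) [Ring R] (Y X : Type*) [AddCommGroup Y] [Module R Y]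
    [AddCommGroup X] [Module R X] : Prop :=
  ∀ (N : Submodule R Y) (f : N →ₗ[R] X), ∃ g : Y →ₗ[R] X, ∀ n : N, g n = f n


section EssAux
variable {R : Type*} {M : Type*} [Ring R] [AddCommGroup M] [Module R M]

lemma ess_mono {N N' : Submodule R M} (h : N ≤ N') (hN : IsEssentialSubmodule N) :
    IsEssentialSubmodule N' := fun Z hZ hb =>
  hN Z hZ (le_bot_iff.mp ((inf_le_inf_right Z h).trans hb.le))

lemma ess_inf {N N' : Submodule R M} (hN : IsEssentialSubmodule N)
    (hN' : IsEssentialSubmodule N') : IsEssentialSubmodule (N ⊓ N') := fun Z hZ => by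
  rw [inf_assoc]; exact hN _ (hN' Z hZ)

lemma ess_top : IsEssentialSubmodule (⊤ : Submodule R M) := fun Z hZ => by rwa [top_inf_eq]

end EssAux

variable {A : Type u} [Ring A]

def lmul (b : A) : A →ₗ[Aᵐᵒᵖ] A where
  toFun a := b * a
  map_add' := mul_add b
  map_smul' c a := (mul_assoc b a c.unop).symm

lemma ess_comap_lmul {E : Submodule Aᵐᵒᵖ A} (hE : IsEssentialSubmodule E) (b : A) :
    IsEssentialSubmodule (E.comap (lmul b)) := by
  intro C hC
  by_cases hb : Submodule.map (lmul b) C = ⊥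
  · have hle : C ≤ E.comap (lmul b) := by
      intro c hc
      have h0 : lmul b c ∈ Submodule.map (lmul b) C := Submodule.mem_map_of_mem hc
      rw [hb, Submodule.mem_bot] at h0
      show b * c ∈ E
      show lmul b c ∈ E
      rw [h0]; exact E.zero_mem
    rw [inf_eq_right.mpr hle]; exact hC
  · obtain ⟨y, hy, hy0⟩ := (Submodule.ne_bot_iff _).mp (hE _ hb)
    rw [Submodule.mem_inf] at hy
    obtain ⟨c, hcC, hcy⟩ := hy.2
    rw [Submodule.ne_bot_iff]
    refine ⟨c, Submodule.mem_inf.mpr ⟨show lmul b c ∈ E by rw [hcy]; exact hy.1, hcC⟩, ?_⟩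
    rintro rfl
    exact hy0 (by rw [← hcy, map_zero])

lemma rAnn_le_rAnn_mul (a c : A) : rAnn A c ≤ rAnn A (a * c) := by
  intro d hd
  have hd' : c * d = 0 := hd
  show (a * c) * d = 0
  rw [mul_assoc, hd', mul_zero]

lemma comap_le_rAnn_mul (a c : A) : (rAnn A a).comap (lmul c) ≤ rAnn A (a * c) := by
  intro d hd
  have hd' : a * (c * d) = 0 := hd
  show (a * c) * d = 0
  rw [mul_assoc]; exact hd'

def Zsing (A : Type u) [Ring A] : Submodule Aᵐᵒᵖ A where
  carrier := {a | IsEssentialSubmodule (rAnn A a)}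
  zero_mem' := ess_mono (fun a _ => smul_zero _) ess_top
  add_mem' := by
    intro a b ha hb
    refine ess_mono ?_ (ess_inf ha hb)
    intro d hd
    rw [Submodule.mem_inf] at hd
    have h1 : op d • a = 0 := hd.1
    have h2 : op d • b = 0 := hd.2
    show op d • (a + b) = 0
    rw [smul_add, h1, h2, add_zero]
  smul_mem' := by
    intro c a ha
    show IsEssentialSubmodule (rAnn A (a * c.unop))
    exact ess_mono (comap_le_rAnn_mul a c.unop) (ess_comap_lmul ha c.unop)

lemma mem_Zsing {a : A} : a ∈ Zsing A ↔ IsEssentialSubmodule (rAnn A a) := Iff.rfl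

def Ztwo (A : Type u) [Ring A] : Submodule Aᵐᵒᵖ A where
  carrier := {a | IsEssentialSubmodule ((Zsing A).comap (lmul a))}
  zero_mem' := ess_mono (fun b _ => show (0:A) * b ∈ Zsing A by rw [zero_mul]; exact zero_mem _) ess_top
  add_mem' := by
    intro a b ha hb
    refine ess_mono ?_ (ess_inf ha hb)
    intro d hd
    rw [Submodule.mem_inf] at hd
    show (a + b) * d ∈ Zsing A
    rw [add_mul]
    exact add_mem hd.1 hd.2
  smul_mem' := by
    intro c a ha
    show IsEssentialSubmodule ((Zsing A).comap (lmul (a * c.unop)))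
    refine ess_mono ?_ (ess_comap_lmul ha c.unop)
    intro d hd
    have hd' : a * (c.unop * d) ∈ Zsing A := hd
    show (a * c.unop) * d ∈ Zsing A
    rw [mul_assoc]; exact hd'

lemma mem_Ztwo {a : A} : a ∈ Ztwo A ↔ IsEssentialSubmodule ((Zsing A).comap (lmul a)) := Iff.rfl

lemma nonsingular_quot_Ztwo : IsNonsingular A (A ⧸ Ztwo A) := by
  intro x hx
  obtain ⟨a, rfl⟩ := Submodule.Quotient.mk_surjective _ x
  rw [Submodule.Quotient.mk_eq_zero]
  rw [mem_Ztwo]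
  have hK : IsEssentialSubmodule ((Ztwo A).comap (lmul a)) := by
    refine ess_mono ?_ hx
    intro c hc
    have h0 : op c • (Submodule.Quotient.mk a : A ⧸ Ztwo A) = 0 := hc
    rw [← Submodule.Quotient.mk_smul, Submodule.Quotient.mk_eq_zero] at h0
    exact h0
  intro C hC
  obtain ⟨c, hc, hc0⟩ := (Submodule.ne_bot_iff _).mp (hK C hC)
  rw [Submodule.mem_inf] at hc
  obtain ⟨hcK, hcC⟩ := hc
  rw [Submodule.ne_bot_iff]
  by_cases hcZ : c ∈ Zsing A
  · exact ⟨c, Submodule.mem_inf.mpr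
      ⟨show a * c ∈ Zsing A from ess_mono (rAnn_le_rAnn_mul a c) hcZ, hcC⟩, hc0⟩
  · have hL : IsEssentialSubmodule ((Zsing A).comap (lmul (a * c))) := hcK
    have hex : ∃ l ∈ (Zsing A).comap (lmul (a * c)), c * l ≠ 0 := by
      by_contra hno
      push_neg at hno
      refine hcZ (ess_mono ?_ hL)
      intro l hl
      show c * l = 0
      exact hno l hl
    obtain ⟨l, hl, hcl⟩ := hex
    refine ⟨c * l, Submodule.mem_inf.mpr ⟨?_, ?_⟩, hcl⟩
    · show a * (c * l) ∈ Zsing A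
      rw [← mul_assoc]
      exact hl
    · exact C.smul_mem (op l) hcC

lemma goldie_le_Ztwo : goldieRadical A A ≤ Ztwo A := sInf_le nonsingular_quot_Ztwo

section Kill
variable {X : Type v} [AddCommGroup X] [Module Aᵐᵒᵖ X]

lemma kill_singular (hns : IsNonsingular A X) (I : Ideal Aᵐᵒᵖ) (f : I →ₗ[Aᵐᵒᵖ] X)
    (x : Aᵐᵒᵖ) (hx : x ∈ I) (hz : unop x ∈ Zsing A) : f ⟨x, hx⟩ = 0 := by
  apply hns
  refine ess_mono ?_ hz
  intro d hd
  have hd' : unop x * d = 0 := hd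
  show op d • f ⟨x, hx⟩ = 0
  rw [← map_smul]
  have hxz : op d • x = 0 := by
    show op d * x = 0
    rw [← op_unop x, ← op_mul, hd', op_zero]
  have h0 : op d • (⟨x, hx⟩ : I) = 0 := Subtype.ext (by rw [SetLike.val_smul, hxz]; rfl)
  rw [h0, map_zero]

lemma kill_Ztwo (hns : IsNonsingular A X) (I : Ideal Aᵐᵒᵖ) (f : I →ₗ[Aᵐᵒᵖ] X)
    (x : Aᵐᵒᵖ) (hx : x ∈ I) (hz : unop x ∈ Ztwo A) : f ⟨x, hx⟩ = 0 := by
  apply hns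
  have hz' : IsEssentialSubmodule ((Zsing A).comap (lmul (unop x))) := hz
  refine ess_mono ?_ hz'
  intro b hb
  have hb' : unop x * b ∈ Zsing A := hb
  show op b • f ⟨x, hx⟩ = 0
  rw [← map_smul]
  have hmem : op b • x ∈ I := I.smul_mem _ hx
  have h1 : op b • (⟨x, hx⟩ : I) = ⟨op b • x, hmem⟩ := rfl
  rw [h1]
  refine kill_singular hns I f _ hmem ?_
  have hunop : unop (op b • x) = unop x * b := by
    show unop (op b * x) = unop x * b
    rw [unop_mul, unop_op]
  rw [hunop]; exact hb'

end Kill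



/-- **Lemma 2.8(5).** Let `G = G(A_A)` be the right Goldie radical of `A`, `h : A → B` the
natural epimorphism onto `A/G`, and `X` a nonzero non-singular right `A`-module (with its
natural compatible `A/G`-module structure). Then `X` is an injective `A/G`-module if and
only if `X` is an injective `A`-module. -/
theorem injective_over_quotient_iff
    (A : Type u) [Ring A] (B : Type u) [Ring B] (h : A →+* B)
    (hsurj : Function.Surjective h)
    (hker : ∀ a : A, h a = 0 ↔ a ∈ goldieRadical A A)
    (X : Type u) [AddCommGroup X] [Module Aᵐᵒᵖ X] [Module Bᵐᵒᵖ X]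
    (hcompat : ∀ (a : A) (x : X), op (h a) • x = op a • x)
    (hXne : Nontrivial X) (hns : IsNonsingular A X) :
    Module.Injective Bᵐᵒᵖ X ↔ Module.Injective Aᵐᵒᵖ X := by
  classical
  set ψ : Aᵐᵒᵖ →+* Bᵐᵒᵖ := RingHom.op h with hψdef
  have hψop : ∀ a : A, ψ (op a) = op (h a) := fun a => rfl
  have hψsurj : ∀ y : Bᵐᵒᵖ, ∃ x : Aᵐᵒᵖ, ψ x = y := by
    intro y
    obtain ⟨a, ha⟩ := hsurj (unop y)
    exact ⟨op a, by rw [hψop, ha, op_unop]⟩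
  have hBc : ∀ (x : Aᵐᵒᵖ) (t : X), ψ x • t = x • t := by
    intro x t
    have h1 := hcompat (unop x) t
    rw [op_unop] at h1
    rw [← op_unop x, hψop]
    exact h1
  constructor
  · -- hard direction: B-injective → A-injective
    intro hB
    refine Module.Baer.injective ?_
    have hBaerB : Module.Baer Bᵐᵒᵖ X := Module.Baer.of_injective hB
    intro I f
    have key : ∀ (x x' : Aᵐᵒᵖ) (hx : x ∈ I) (hx' : x' ∈ I), ψ x = ψ x' →
        f ⟨x, hx⟩ = f ⟨x', hx'⟩ := by
      intro x x' hx hx' he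
      have h1 : f ⟨x - x', sub_mem hx hx'⟩ = 0 := by
        refine kill_Ztwo hns I f _ _ (goldie_le_Ztwo ?_)
        rw [← hker]
        have h2 : ψ (x - x') = 0 := by rw [map_sub, he, sub_self]
        rw [← op_unop (x - x'), hψop] at h2
        exact op_injective (by rw [h2, op_zero])
      have h2 : (⟨x - x', sub_mem hx hx'⟩ : I) = ⟨x, hx⟩ - ⟨x', hx'⟩ := rfl
      rw [h2, map_sub] at h1
      exact sub_eq_zero.mp h1
    let J : Ideal Bᵐᵒᵖ :=
      { carrier := {y | ∃ x ∈ I, ψ x = y}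
        zero_mem' := ⟨0, zero_mem _, map_zero ψ⟩
        add_mem' := by
          rintro y z ⟨x, hx, rfl⟩ ⟨w, hw, rfl⟩
          exact ⟨x + w, add_mem hx hw, map_add ψ x w⟩
        smul_mem' := by
          rintro c y ⟨x, hx, rfl⟩
          obtain ⟨d, rfl⟩ := hψsurj c
          exact ⟨d * x, I.smul_mem d hx, map_mul ψ d x⟩ }
    have hJ : ∀ y : J, ∃ x ∈ I, ψ x = (y : Bᵐᵒᵖ) := fun y => y.2
    choose sec hsec1 hsec2 using hJ
    have keysec : ∀ (y : J) (x : Aᵐᵒᵖ) (hx : x ∈ I), ψ x = (y : Bᵐᵒᵖ) →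
        f ⟨sec y, hsec1 y⟩ = f ⟨x, hx⟩ := fun y x hx hxe =>
      key _ _ _ hx (by rw [hsec2, hxe])
    let fbar : J →ₗ[Bᵐᵒᵖ] X :=
      { toFun := fun y => f ⟨sec y, hsec1 y⟩
        map_add' := by
          intro y z
          show f ⟨sec (y + z), hsec1 (y + z)⟩ = f ⟨sec y, hsec1 y⟩ + f ⟨sec z, hsec1 z⟩
          rw [keysec (y + z) (sec y + sec z) (add_mem (hsec1 y) (hsec1 z))
            (by rw [map_add, hsec2, hsec2]; rfl)]
          have h3 : (⟨sec y + sec z, add_mem (hsec1 y) (hsec1 z)⟩ : I)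
              = ⟨sec y, hsec1 y⟩ + ⟨sec z, hsec1 z⟩ := rfl
          rw [h3, map_add]
        map_smul' := by
          intro c y
          obtain ⟨d, rfl⟩ := hψsurj c
          show f ⟨sec (ψ d • y), hsec1 (ψ d • y)⟩ = ψ d • f ⟨sec y, hsec1 y⟩
          rw [keysec (ψ d • y) (d * sec y) (I.smul_mem d (hsec1 y))
            (by rw [map_mul, hsec2]; rfl)]
          have h3 : (⟨d * sec y, I.smul_mem d (hsec1 y)⟩ : I)
              = d • ⟨sec y, hsec1 y⟩ := rfl
          rw [h3, map_smul, ← hBc d] }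
    obtain ⟨g, hg⟩ := hBaerB J fbar
    refine ⟨{ toFun := fun r => r • g 1
              map_add' := fun r s => add_smul r s (g 1)
              map_smul' := fun r s => mul_smul r s (g 1) }, ?_⟩
    intro x hx
    have hmemJ : ψ x ∈ J := ⟨x, hx, rfl⟩
    have e1 : f ⟨x, hx⟩ = fbar ⟨ψ x, hmemJ⟩ := (keysec ⟨ψ x, hmemJ⟩ x hx rfl).symm
    have e2 : fbar ⟨ψ x, hmemJ⟩ = g (ψ x) := (hg (ψ x) hmemJ).symm
    have e3 : g (ψ x) = ψ x • g 1 := by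
      conv_lhs => rw [show ψ x = ψ x • (1 : Bᵐᵒᵖ) by rw [smul_eq_mul, mul_one]]
      rw [map_smul]
    show x • g 1 = f ⟨x, hx⟩
    rw [e1, e2, e3, hBc]
  · -- easy direction: A-injective → B-injective
    intro hA
    refine Module.Baer.injective ?_
    have hBaerA : Module.Baer Aᵐᵒᵖ X := Module.Baer.of_injective hA
    intro J fJ
    let I : Ideal Aᵐᵒᵖ := J.comap ψ
    let F : I →ₗ[Aᵐᵒᵖ] X :=
      { toFun := fun x => fJ ⟨ψ ↑x, x.2⟩
        map_add' := by
          intro x y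
          have h3 : (⟨ψ ↑(x + y), (x + y).2⟩ : J) = ⟨ψ ↑x, x.2⟩ + ⟨ψ ↑y, y.2⟩ := by
            apply Subtype.ext
            show ψ (↑x + ↑y) = ψ ↑x + ψ ↑y
            rw [map_add]
          show fJ ⟨ψ ↑(x + y), (x + y).2⟩ = fJ ⟨ψ ↑x, x.2⟩ + fJ ⟨ψ ↑y, y.2⟩
          rw [h3, map_add]
        map_smul' := by
          intro c x
          have h3 : (⟨ψ ↑(c • x), (c • x).2⟩ : J) = ψ c • ⟨ψ ↑x, x.2⟩ := by
            apply Subtype.ext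
            show ψ (c * ↑x) = ψ c * ψ ↑x
            rw [map_mul]
          show fJ ⟨ψ ↑(c • x), (c • x).2⟩ = c • fJ ⟨ψ ↑x, x.2⟩
          rw [h3, map_smul, hBc] }
    obtain ⟨g, hg⟩ := hBaerA I F
    refine ⟨{ toFun := fun r => r • g 1
              map_add' := fun r s => add_smul r s (g 1)
              map_smul' := fun r s => mul_smul r s (g 1) }, ?_⟩
    intro y hy
    obtain ⟨x, hxy⟩ := hψsurj y
    have hxI : x ∈ I := by show ψ x ∈ J; rw [hxy]; exact hy
    have e1 : fJ ⟨y, hy⟩ = F ⟨x, hxI⟩ := by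
      show fJ ⟨y, hy⟩ = fJ ⟨ψ x, hxI⟩
      congr 1
      exact Subtype.ext hxy.symm
    have e2 : F ⟨x, hxI⟩ = g x := (hg x hxI).symm
    have e3 : g x = x • g 1 := by
      conv_lhs => rw [show x = x • (1 : Aᵐᵒᵖ) by rw [smul_eq_mul, mul_one]]
      rw [map_smul]
    show y • g 1 = fJ ⟨y, hy⟩
    rw [e1, e2, e3, ← hBc, hxy]

end TugPaper
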